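/- arXiv:2211.09986 — 4 statements merged into one kernel-verified Lean document; each statement's English description precedes it below -/
import Mathlib

section
/- Let x be a pair-alternating binary vector of length 2n (every pair of x equals (0,1) or (1,0)), and let j be an even positive integer dividing 2n. Then d_H(x, s_j) = d_H(x, s̄_j) = n, where s_j is the stripe vector of block size j and s̄_j is its complement. -/
/-- The stripe vector of block size `j` and length `2n`:
alternating blocks of `j` zeros and `j` ones, starting with zeros. -/
def stripe (n j : ℕ) : Fin (2 * n) → Bool :=
  fun i => decide ((i.val / j) % 2 = 1)

/-- The `p`-th pair of a binary vector of length `2n`: `(x(2p), x(2p+1))`. -/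
def pairAt {n : ℕ} (x : Fin (2 * n) → Bool) (p : Fin n) : Bool × Bool :=
  (x ⟨2 * p.val, by have := p.isLt; omega⟩,
   x ⟨2 * p.val + 1, by have := p.isLt; omega⟩)

/-- A binary vector of length `2n` is pair-alternating if every pair is `(0,1)` or `(1,0)`. -/
def PairAlternating {n : ℕ} (x : Fin (2 * n) → Bool) : Prop :=
  ∀ p : Fin n, pairAt x p = (false, true) ∨ pairAt x p = (true, false)

def pairEquiv (n : ℕ) : Fin n × Fin 2 ≃ Fin (2 * n) :=
  finProdFinEquiv.trans (finCongr (Nat.mul_comm n 2))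

lemma pairEquiv_val (n : ℕ) (q : Fin n × Fin 2) :
    (pairEquiv n q).val = q.2.val + 2 * q.1.val := rfl


/-- A pair-alternating vector of length `2n` is at Hamming distance
exactly `n` from the stripe vector of every even positive block size `j` dividing `2n`,
and from its complement. -/
theorem pairAlternating_dist_to_even_stripe
    (n j : ℕ) (x : Fin (2 * n) → Bool)
    (hx : PairAlternating x)
    (hjpos : 0 < j) (hjeven : Even j) (hjdvd : j ∣ 2 * n) :
    hammingDist x (stripe n j) = n ∧
    hammingDist x (fun i => !(stripe n j i)) = n := by
  obtain ⟨k, hk⟩ := hjeven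
  -- stripe is constant on pairs
  have hstripe : ∀ p : Fin n,
      stripe n j ⟨2 * p.val, by have := p.isLt; omega⟩ =
      stripe n j ⟨2 * p.val + 1, by have := p.isLt; omega⟩ := by
    intro p
    simp only [stripe, decide_eq_decide]
    have hdiv : (2 * p.val + 1) / j = 2 * p.val / j := by
      rw [Nat.succ_div]
      have : ¬ j ∣ 2 * p.val + 1 := by
        intro hd
        have h2 : (2 : ℕ) ∣ 2 * p.val + 1 := dvd_trans ⟨k, by omega⟩ hd
        omega
      simp [this]
    rw [hdiv]
  have main : ∀ y : Fin (2 * n) → Bool,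
      (∀ p : Fin n, y ⟨2 * p.val, by have := p.isLt; omega⟩ =
        y ⟨2 * p.val + 1, by have := p.isLt; omega⟩) →
      hammingDist x y = n := by
    intro y hy
    set e := pairEquiv n with he_def
    have he : ∀ q : Fin n × Fin 2, (e q).val = q.2.val + 2 * q.1.val :=
      fun q => pairEquiv_val n q
    unfold hammingDist
    rw [Finset.card_filter]
    rw [← Fintype.sum_equiv e (fun q => if x (e q) ≠ y (e q) then 1 else 0)
      (fun i => if x i ≠ y i then 1 else 0) (fun q => rfl)]
    rw [Fintype.sum_prod_type]
    have hone : ∀ p : Fin n,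
        (∑ a : Fin 2, if x (e (p, a)) ≠ y (e (p, a)) then 1 else 0) = 1 := by
      intro p
      rw [Fin.sum_univ_two]
      have h0 : e (p, 0) = ⟨2 * p.val, by have := p.isLt; omega⟩ := by
        apply Fin.ext; rw [he]; simp
      have h1 : e (p, 1) = ⟨2 * p.val + 1, by have := p.isLt; omega⟩ := by
        apply Fin.ext; rw [he]; simp; omega
      rw [h0, h1]
      have := hy p
      rcases hx p with h | h <;>
        simp only [pairAt, Prod.mk.injEq] at h <;>
        rw [h.1, h.2] at * <;>
        rcases Bool.eq_false_or_eq_true (y ⟨2 * p.val + 1, by have := p.isLt; omega⟩) with hb | hb <;>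
        simp_all
    rw [Finset.sum_congr rfl (fun p _ => hone p), Finset.sum_const]
    simp
  constructor
  · exact main _ hstripe
  · exact main _ (fun p => by rw [hstripe p])
end

section
/- Let n be even and let x be a balanced pair-alternating binary vector of length 2n (every pair of x equals (0,1) or (1,0), and the number of (0,1)-pairs equals the number of (1,0)-pairs). Then for every power of two j dividing 2n — including j = 2n, for which s_j and s̄_j are the all-zeros and all-ones vectors — one has d_H(x, s_j) = d_H(x, s̄_j) = n. -/
lemma sum_pairs {n : ℕ} (f : Fin (2 * n) → ℕ) :
    ∑ i, f i = ∑ p : Fin n,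
      (f ⟨2 * p.val, by have := p.isLt; omega⟩ +
       f ⟨2 * p.val + 1, by have := p.isLt; omega⟩) := by
  rw [← Fintype.sum_equiv
    ((finProdFinEquiv : Fin n × Fin 2 ≃ Fin (n * 2)).trans (finCongr (mul_comm n 2)))
    (fun pb => f (((finProdFinEquiv : Fin n × Fin 2 ≃ Fin (n * 2)).trans (finCongr (mul_comm n 2))) pb))
    f (fun _ => rfl)]
  rw [Fintype.sum_prod_type]
  refine Finset.sum_congr rfl fun p _ => ?_
  rw [Fin.sum_univ_two]
  congr 1 <;>
  · congr 1; apply Fin.ext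
    simp [finProdFinEquiv]; try omega

lemma dist_pairs {n : ℕ} (x y : Fin (2 * n) → Bool) :
    hammingDist x y = ∑ p : Fin n,
      ((if x ⟨2 * p.val, by have := p.isLt; omega⟩ ≠ y ⟨2 * p.val, by have := p.isLt; omega⟩ then 1 else 0) +
       (if x ⟨2 * p.val + 1, by have := p.isLt; omega⟩ ≠ y ⟨2 * p.val + 1, by have := p.isLt; omega⟩ then 1 else 0)) := by
  rw [hammingDist, Finset.card_filter]
  exact sum_pairs _

/-- For `n` even, a balanced pair-alternating vector of length `2n`
(as many `(0,1)` pairs as `(1,0)` pairs) is at Hamming distance exactly `n` from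
every stripe vector whose block size is a power of two dividing `2n` (including
block size `2n`, giving the all-zeros vector) and from its complement. -/
theorem balanced_pairAlternating_dist_to_pow_two_stripes
    (n : ℕ) (hn : Even n) (x : Fin (2 * n) → Bool)
    (hx : PairAlternating x)
    (hbal : (Finset.univ.filter (fun p : Fin n => pairAt x p = (false, true))).card =
      (Finset.univ.filter (fun p : Fin n => pairAt x p = (true, false))).card) :
    ∀ i : ℕ, (2 ^ i : ℕ) ∣ 2 * n →
      hammingDist x (stripe n (2 ^ i)) = n ∧
      hammingDist x (fun t => !(stripe n (2 ^ i) t)) = n := by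
  -- total count of pairs
  have hsplit : (Finset.univ.filter (fun p : Fin n => pairAt x p = (false, true))).card +
      (Finset.univ.filter (fun p : Fin n => pairAt x p = (true, false))).card = n := by
    have : (Finset.univ.filter (fun p : Fin n => pairAt x p = (true, false))) =
        (Finset.univ.filter (fun p : Fin n => ¬ (pairAt x p = (false, true)))) := by
      ext p
      simp only [Finset.mem_filter, Finset.mem_univ, true_and]
      rcases hx p with h | h <;> simp [h]
    rw [this, Finset.card_filter_add_card_filter_not, Finset.card_univ, Fintype.card_fin]
  intro i hdvd
  cases i with
  | zero =>
    -- stripe n 1 is 0101...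
    have hs0 : ∀ p : Fin n, stripe n 1 ⟨2 * p.val, by have := p.isLt; omega⟩ = false := by
      intro p; simp [stripe, Nat.div_one]; try omega
    have hs1 : ∀ p : Fin n, stripe n 1 ⟨2 * p.val + 1, by have := p.isLt; omega⟩ = true := by
      intro p; simp [stripe, Nat.div_one]
    constructor
    · rw [dist_pairs]
      have hterm : ∀ p : Fin n,
          ((if x ⟨2 * p.val, by have := p.isLt; omega⟩ ≠ stripe n 1 ⟨2 * p.val, by have := p.isLt; omega⟩ then 1 else 0) +
           (if x ⟨2 * p.val + 1, by have := p.isLt; omega⟩ ≠ stripe n 1 ⟨2 * p.val + 1, by have := p.isLt; omega⟩ then 1 else 0)) =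
          (if pairAt x p = (true, false) then 2 else 0) := by
        intro p
        rcases hx p with h | h <;>
        · rw [Prod.ext_iff] at h
          obtain ⟨h1, h2⟩ := h
          simp only [pairAt] at h1 h2
          rw [h1, h2, hs0 p, hs1 p]
          simp [pairAt, h1, h2]
      rw [pow_zero]
      calc ∑ p : Fin n, _ = ∑ p : Fin n, (if pairAt x p = (true, false) then 2 else 0) :=
            Finset.sum_congr rfl fun p _ => hterm p
        _ = 2 * (Finset.univ.filter (fun p : Fin n => pairAt x p = (true, false))).card := by
            rw [Finset.card_filter, Finset.mul_sum]
            refine Finset.sum_congr rfl fun p _ => ?_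
            split <;> simp
        _ = n := by omega
    · rw [dist_pairs]
      have hterm : ∀ p : Fin n,
          ((if x ⟨2 * p.val, by have := p.isLt; omega⟩ ≠ !(stripe n 1 ⟨2 * p.val, by have := p.isLt; omega⟩) then 1 else 0) +
           (if x ⟨2 * p.val + 1, by have := p.isLt; omega⟩ ≠ !(stripe n 1 ⟨2 * p.val + 1, by have := p.isLt; omega⟩) then 1 else 0)) =
          (if pairAt x p = (false, true) then 2 else 0) := by
        intro p
        rcases hx p with h | h <;>
        · rw [Prod.ext_iff] at h
          obtain ⟨h1, h2⟩ := h
          simp only [pairAt] at h1 h2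
          rw [h1, h2, hs0 p, hs1 p]
          simp [pairAt, h1, h2]
      rw [pow_zero]
      calc ∑ p : Fin n, _ = ∑ p : Fin n, (if pairAt x p = (false, true) then 2 else 0) :=
            Finset.sum_congr rfl fun p _ => hterm p
        _ = 2 * (Finset.univ.filter (fun p : Fin n => pairAt x p = (false, true))).card := by
            rw [Finset.card_filter, Finset.mul_sum]
            refine Finset.sum_congr rfl fun p _ => ?_
            split <;> simp
        _ = n := by omega
  | succ m =>
    -- block size is even: stripe is constant on each pair
    set k := 2 ^ m with hk
    have hkpos : 1 ≤ k := Nat.one_le_two_pow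
    have hsame : ∀ p : Fin n,
        stripe n (2 ^ (m + 1)) ⟨2 * p.val + 1, by have := p.isLt; omega⟩ =
        stripe n (2 ^ (m + 1)) ⟨2 * p.val, by have := p.isLt; omega⟩ := by
      intro p
      have hj : (2 : ℕ) ^ (m + 1) = 2 * k := by rw [pow_succ]; ring
      have hdiv : (2 * p.val + 1) / (2 * k) = (2 * p.val) / (2 * k) := by
        have hmod := Nat.div_add_mod p.val k
        have hlt := Nat.mod_lt p.val (show 0 < k by omega)
        have pos : 0 < 2 * k := by omega
        have hA : 2 * (p.val % k) + 1 < 2 * k := by omega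
        have hB : 2 * (p.val % k) < 2 * k := by omega
        have e0 : (2 * k) * (p.val / k) = 2 * (k * (p.val / k)) := by ring
        have e1 : 2 * p.val + 1 = (2 * (p.val % k) + 1) + (2 * k) * (p.val / k) := by omega
        have e2 : 2 * p.val = (2 * (p.val % k)) + (2 * k) * (p.val / k) := by omega
        rw [e1, e2, Nat.add_mul_div_left _ _ pos, Nat.add_mul_div_left _ _ pos,
          Nat.div_eq_of_lt hA, Nat.div_eq_of_lt hB]
      simp [stripe, hj, hdiv]
    have key : ∀ y : Fin (2 * n) → Bool,
        (∀ p : Fin n, y ⟨2 * p.val + 1, by have := p.isLt; omega⟩ =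
          y ⟨2 * p.val, by have := p.isLt; omega⟩) → hammingDist x y = n := by
      intro y hy
      rw [dist_pairs]
      have hterm : ∀ p : Fin n,
          ((if x ⟨2 * p.val, by have := p.isLt; omega⟩ ≠ y ⟨2 * p.val, by have := p.isLt; omega⟩ then 1 else 0) +
           (if x ⟨2 * p.val + 1, by have := p.isLt; omega⟩ ≠ y ⟨2 * p.val + 1, by have := p.isLt; omega⟩ then (1:ℕ) else 0)) = 1 := by
        intro p
        rcases hx p with h | h <;>
        · rw [Prod.ext_iff] at h
          obtain ⟨h1, h2⟩ := h
          simp only [pairAt] at h1 h2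
          rw [h1, h2, hy p]
          cases y ⟨2 * p.val, by have := p.isLt; omega⟩ <;> simp
      rw [Finset.sum_congr rfl fun p _ => hterm p]
      simp
    exact ⟨key _ hsame, key _ (fun p => by simp [hsame p])⟩
end

section
/- Let c be a pair-alternating binary vector of length 2n encoding the truth assignment a_c, let p ≠ q be two distinct variable indices in Fin n with signs ε_p, ε_q ∈ {true, false}, and let v ∈ {0,1}^{2n} be the clause vector of the 2-clause (p, ε_p; q, ε_q). Then d_H(c, v) = n + 2 − 2s, where s = |{l ∈ {p, q} : a_c(l) = ε_l}| is the number of literals of the clause satisfied by a_c. Consequently, d_H(c, v) ≤ n if and only if a_c satisfies the clause (i.e., a_c(p) = ε_p or a_c(q) = ε_q). -/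
/-- The truth assignment encoded by a pair-alternating vector `c`:
variable `p` is true iff the `p`-th pair of `c` is `(0,1)`. -/
def assignOf {n : ℕ} (c : Fin (2 * n) → Bool) : Fin n → Bool :=
  fun p => decide (pairAt c p = (false, true))

/-- The clause vector of the 2-clause `(p, sp; q, sq)`: zero in every pair, except
that pair `p` is `(0,1)` if `sp = true` and `(1,0)` otherwise, and analogously for
pair `q` with sign `sq`. -/
def clauseVec (n : ℕ) (p q : Fin n) (sp sq : Bool) : Fin (2 * n) → Bool :=
  fun i =>
    if i.val = 2 * p.val then !sp
    else if i.val = 2 * p.val + 1 then sp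
    else if i.val = 2 * q.val then !sq
    else if i.val = 2 * q.val + 1 then sq
    else false

def idx0 {n : ℕ} (l : Fin n) : Fin (2 * n) := ⟨2 * l.val, by have := l.isLt; omega⟩
def idx1 {n : ℕ} (l : Fin n) : Fin (2 * n) := ⟨2 * l.val + 1, by have := l.isLt; omega⟩

lemma hamming_as_sum {n : ℕ} (c v : Fin (2 * n) → Bool) :
    hammingDist c v = ∑ l : Fin n,
      ((if c (idx0 l) ≠ v (idx0 l) then 1 else 0) +
       (if c (idx1 l) ≠ v (idx1 l) then 1 else 0)) := by
  rw [hammingDist, Finset.card_filter]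
  rw [← Fintype.sum_equiv (finProdFinEquiv.trans (finCongr (mul_comm n 2)))
    (fun x : Fin n × Fin 2 => if c ((finProdFinEquiv.trans (finCongr (mul_comm n 2))) x)
        ≠ v ((finProdFinEquiv.trans (finCongr (mul_comm n 2))) x) then 1 else 0)
    (fun i => if c i ≠ v i then 1 else 0) (fun x => rfl)]
  rw [Fintype.sum_prod_type]
  refine Finset.sum_congr rfl fun l _ => ?_
  rw [Fin.sum_univ_two]
  have h0 : (finProdFinEquiv.trans (finCongr (mul_comm n 2))) (l, 0) = idx0 l := by
    apply Fin.ext; simp [finProdFinEquiv, idx0]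
  have h1 : (finProdFinEquiv.trans (finCongr (mul_comm n 2))) (l, 1) = idx1 l := by
    apply Fin.ext; simp [finProdFinEquiv, idx1]; omega
  rw [h0, h1]

/-- For a pair-alternating `c` encoding assignment `a_c`, and the clause
vector `v` of a 2-clause on distinct variables `p ≠ q` with signs `sp, sq`, we have
`d_H(c, v) = n + 2 - 2s` where `s` is the number of literals of the clause satisfied
by `a_c`; consequently `d_H(c, v) ≤ n` iff `a_c` satisfies the clause. -/
theorem clause_gadget_correct
    (n : ℕ) (c : Fin (2 * n) → Bool) (hc : PairAlternating c)
    (p q : Fin n) (hpq : p ≠ q) (sp sq : Bool) :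
    ((hammingDist c (clauseVec n p q sp sq) : ℤ) =
      (n : ℤ) + 2 - 2 * ((if assignOf c p = sp then 1 else 0) +
        (if assignOf c q = sq then 1 else 0))) ∧
    (hammingDist c (clauseVec n p q sp sq) ≤ n ↔
      (assignOf c p = sp ∨ assignOf c q = sq)) := by
  set v := clauseVec n p q sp sq with hv
  have hpqv : p.val ≠ q.val := fun h => hpq (Fin.ext h)
  have hn2 : 2 ≤ n := by have := p.isLt; have := q.isLt; omega
  set g : Fin n → ℕ := fun l =>
      (if c (idx0 l) ≠ v (idx0 l) then 1 else 0) +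
      (if c (idx1 l) ≠ v (idx1 l) then 1 else 0) with hg
  have hsum : hammingDist c v = ∑ l : Fin n, g l := hamming_as_sum c v
  -- pairAt in terms of idx
  have hpair : ∀ l : Fin n, pairAt c l = (c (idx0 l), c (idx1 l)) := fun l => rfl
  -- contribution of generic pair
  have hother : ∀ l : Fin n, l ≠ p → l ≠ q → g l = 1 := by
    intro l hlp hlq
    have hlp' : l.val ≠ p.val := fun h => hlp (Fin.ext h)
    have hlq' : l.val ≠ q.val := fun h => hlq (Fin.ext h)
    have hv0 : v (idx0 l) = false := by
      simp only [hv, clauseVec, idx0]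
      rw [if_neg (by omega), if_neg (by omega), if_neg (by omega), if_neg (by omega)]
    have hv1 : v (idx1 l) = false := by
      simp only [hv, clauseVec, idx1]
      rw [if_neg (by omega), if_neg (by omega), if_neg (by omega), if_neg (by omega)]
    rcases hc l with h | h <;>
      · rw [hpair l] at h
        obtain ⟨h1, h2⟩ := Prod.mk.injEq .. ▸ h
        simp [hg, hv0, hv1, h1, h2]
  have hgp : g p = if assignOf c p = sp then 0 else 2 := by
    have hv0 : v (idx0 p) = !sp := by
      simp only [hv, clauseVec, idx0]; rw [if_pos trivial]
    have hv1 : v (idx1 p) = sp := by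
      simp only [hv, clauseVec, idx1]; rw [if_neg (by omega), if_pos trivial]
    rcases hc p with h | h
    · have ha : assignOf c p = true := by simp [assignOf, h]
      rw [hpair p] at h
      obtain ⟨h1, h2⟩ := Prod.mk.injEq .. ▸ h
      cases sp <;> simp_all [hg]
    · have ha : assignOf c p = false := by simp [assignOf, h]
      rw [hpair p] at h
      obtain ⟨h1, h2⟩ := Prod.mk.injEq .. ▸ h
      cases sp <;> simp_all [hg]
  have hgq : g q = if assignOf c q = sq then 0 else 2 := by
    have hv0 : v (idx0 q) = !sq := by
      simp only [hv, clauseVec, idx0]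
      rw [if_neg (by omega), if_neg (by omega), if_pos trivial]
    have hv1 : v (idx1 q) = sq := by
      simp only [hv, clauseVec, idx1]
      rw [if_neg (by omega), if_neg (by omega), if_neg (by omega), if_pos trivial]
    rcases hc q with h | h
    · have ha : assignOf c q = true := by simp [assignOf, h]
      rw [hpair q] at h
      obtain ⟨h1, h2⟩ := Prod.mk.injEq .. ▸ h
      cases sq <;> simp_all [hg]
    · have ha : assignOf c q = false := by simp [assignOf, h]
      rw [hpair q] at h
      obtain ⟨h1, h2⟩ := Prod.mk.injEq .. ▸ h
      cases sq <;> simp_all [hg]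
  -- split the sum
  have hsplit : ∑ l : Fin n, g l = g p + g q + (n - 2) := by
    have hmemq : q ∈ (Finset.univ : Finset (Fin n)) \ {p} := by
      simp [Finset.mem_sdiff, hpq.symm]
    rw [← Finset.add_sum_erase _ g (Finset.mem_univ p)]
    have : Finset.univ.erase p = (Finset.univ : Finset (Fin n)) \ {p} := by
      ext x; simp [Finset.mem_erase, Finset.mem_sdiff, and_comm]
    rw [this, ← Finset.add_sum_erase _ g hmemq]
    have hrest : ∀ l ∈ ((Finset.univ : Finset (Fin n)) \ {p}).erase q, g l = 1 := by
      intro l hl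
      simp only [Finset.mem_erase, Finset.mem_sdiff, Finset.mem_singleton] at hl
      exact hother l hl.2.2 hl.1
    rw [Finset.sum_congr rfl hrest, Finset.sum_const, smul_eq_mul, mul_one]
    have hcard : (((Finset.univ : Finset (Fin n)) \ {p}).erase q).card = n - 2 := by
      rw [Finset.card_erase_of_mem hmemq]
      simp [Finset.card_sdiff, Finset.card_univ]; omega
    rw [hcard]; ring
  have htot : hammingDist c v = g p + g q + (n - 2) := by rw [hsum, hsplit]
  constructor
  · rw [htot, hgp, hgq]
    split <;> split <;> push_cast <;> omega
  · rw [htot, hgp, hgq]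
    constructor
    · intro h
      by_contra hcon
      push_neg at hcon
      rw [if_neg hcon.1, if_neg hcon.2] at h
      omega
    · intro h
      rcases h with h | h
      · rw [if_pos h]; split <;> omega
      · rw [if_pos h]; split <;> omega
end

section
/- Let n = 2^k with k ≥ 1, and let B = {s_j, s̄_j : j = 2^i, 0 ≤ i ≤ k+1} be the set of stripe vectors of length 2n with power-of-two block sizes together with their complements (so B contains 2(k+2) distinct vectors, including the all-zeros and all-ones vectors). Let m ≥ 0 and let V be a multiset of binary vectors of length 2n consisting of m+1 copies of each vector in B together with m further arbitrary binary vectors of length 2n. Then every c ∈ {0,1}^{2n} that maximizes the approval count App(c) = |{v ∈ V : d_H(c, v) ≤ n}| (counted with multiplicity) satisfies d_H(c, b) ≤ n for every b ∈ B. -/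
/-- The multiset `B` of stripe vectors of length `2 * 2^k` with block sizes
`2^i` for `0 ≤ i ≤ k + 1`, together with their coordinatewise complements
(including the all-zeros and all-ones vectors, for `i = k + 1`). -/
def stripeFamily (k : ℕ) : Multiset (Fin (2 * 2 ^ k) → Bool) :=
  (Multiset.range (k + 2)).bind
    (fun i => {stripe (2 ^ k) (2 ^ i), fun t => !(stripe (2 ^ k) (2 ^ i) t)})

/-- The parity-of-bits candidate. -/
def cstar (k : ℕ) : Fin (2 * 2 ^ k) → Bool :=
  fun i => decide ((((Finset.range (k + 2)).filter (fun r => (i : ℕ).testBit r)).card) % 2 = 1)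

lemma stripe_eq_testBit (k r : ℕ) (i : Fin (2 * 2 ^ k)) :
    stripe (2 ^ k) (2 ^ r) i = (i : ℕ).testBit r := by
  simp [stripe, Nat.testBit_eq_decide_div_mod_eq]

lemma flip_parity (k t i : ℕ) (ht : t < k + 2) :
    (((Finset.range (k + 2)).filter (fun r => (i ^^^ 2 ^ t).testBit r)).card) % 2
      ≠ (((Finset.range (k + 2)).filter (fun r => i.testBit r)).card) % 2 := by
  set S := (Finset.range (k + 2)).filter (fun r => i.testBit r) with hS
  by_cases hb : i.testBit t
  · have hmem : t ∈ S := by simp [hS, Finset.mem_filter, Finset.mem_range, ht, hb]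
    have heq : (Finset.range (k + 2)).filter (fun r => (i ^^^ 2 ^ t).testBit r) = S.erase t := by
      ext r
      simp only [hS, Finset.mem_erase, Finset.mem_filter, Finset.mem_range, Nat.testBit_xor]
      by_cases hr : r = t
      · subst hr; simp [Nat.testBit_two_pow_self, hb]
      · have : (2 ^ t).testBit r = false := Nat.testBit_two_pow_of_ne (fun h => hr h.symm)
        simp [this, hr]
    rw [heq, Finset.card_erase_of_mem hmem]
    have : 1 ≤ S.card := Finset.card_pos.mpr ⟨t, hmem⟩
    omega
  · have hmem : t ∉ S := by simp [hS, Finset.mem_filter, hb]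
    have heq : (Finset.range (k + 2)).filter (fun r => (i ^^^ 2 ^ t).testBit r) = insert t S := by
      ext r
      simp only [hS, Finset.mem_insert, Finset.mem_filter, Finset.mem_range, Nat.testBit_xor]
      by_cases hr : r = t
      · subst hr; simp [Nat.testBit_two_pow_self, hb, ht]
      · have : (2 ^ t).testBit r = false := Nat.testBit_two_pow_of_ne (fun h => hr h.symm)
        simp [this, hr]
    rw [heq, Finset.card_insert_of_notMem hmem]
    omega

lemma half_card {N : ℕ} (P : Fin N → Prop) [DecidablePred P] (σ : Fin N → Fin N)
    (hσ : ∀ i, σ (σ i) = i) (hP : ∀ i, P (σ i) ↔ ¬ P i) :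
    (Finset.univ.filter P).card * 2 = N := by
  have h1 : (Finset.univ.filter P).card = (Finset.univ.filter (fun i => ¬ P i)).card := by
    apply Finset.card_bij' (fun i _ => σ i) (fun i _ => σ i)
    · intro a ha
      simp only [Finset.mem_filter, Finset.mem_univ, true_and] at ha ⊢
      exact fun h => ((hP a).mp h) ha
    · intro a ha
      simp only [Finset.mem_filter, Finset.mem_univ, true_and] at ha ⊢
      exact (hP a).mpr ha
    · intro a _; exact hσ a
    · intro a _; exact hσ a
  have h2 := Finset.card_filter_add_card_filter_not (s := Finset.univ) (p := P)
  simp only [Finset.card_univ, Fintype.card_fin] at h2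
  omega

lemma dist_cstar_stripe (k r : ℕ) (hk : 1 ≤ k) (hr : r < k + 2) :
    hammingDist (cstar k) (stripe (2 ^ k) (2 ^ r)) = 2 ^ k := by
  set t := if r = 0 then 1 else 0 with htdef
  have htk : t ≤ k := by rcases eq_or_ne r 0 with h | h <;> simp [htdef, h] <;> omega
  have htr : t ≠ r := by rcases eq_or_ne r 0 with h | h <;> simp [htdef, h] <;> omega
  have htlt : t < k + 2 := by omega
  have hbound : ∀ i : Fin (2 * 2 ^ k), (i : ℕ) ^^^ 2 ^ t < 2 * 2 ^ k := by
    intro i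
    have h1 : (i : ℕ) < 2 ^ (k + 1) := by
      have := i.isLt; rw [pow_succ]; omega
    have h2 : 2 ^ t < 2 ^ (k + 1) := Nat.pow_lt_pow_right (by norm_num) (by omega)
    have := Nat.xor_lt_two_pow h1 h2
    rw [pow_succ] at this; omega
  set σ : Fin (2 * 2 ^ k) → Fin (2 * 2 ^ k) := fun i => ⟨(i : ℕ) ^^^ 2 ^ t, hbound i⟩ with hσdef
  have hσσ : ∀ i, σ (σ i) = i := by
    intro i
    apply Fin.ext
    simp [hσdef, Nat.xor_assoc]
  have hcs : ∀ i, cstar k (σ i) = !(cstar k i) := by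
    intro i
    have := flip_parity k t (i : ℕ) htlt
    simp only [cstar, hσdef]
    rcases Nat.mod_two_eq_zero_or_one
        ((((Finset.range (k + 2)).filter (fun r => (i : ℕ).testBit r)).card) % 2) with h | h <;>
      rcases Nat.mod_two_eq_zero_or_one
        ((((Finset.range (k + 2)).filter (fun r => ((i : ℕ) ^^^ 2 ^ t).testBit r)).card) % 2)
        with h' | h' <;>
      simp_all
  have hst : ∀ i, stripe (2 ^ k) (2 ^ r) (σ i) = stripe (2 ^ k) (2 ^ r) i := by
    intro i
    rw [stripe_eq_testBit, stripe_eq_testBit]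
    simp only [hσdef]
    have : (2 ^ t).testBit r = false := Nat.testBit_two_pow_of_ne htr
    simp [Nat.testBit_xor, this]
  have key := half_card (fun i => cstar k i ≠ stripe (2 ^ k) (2 ^ r) i) σ hσσ ?_
  · have : hammingDist (cstar k) (stripe (2 ^ k) (2 ^ r))
        = (Finset.univ.filter (fun i => cstar k i ≠ stripe (2 ^ k) (2 ^ r) i)).card := rfl
    rw [this]
    have h2 : (2 : ℕ) * 2 ^ k = 2 ^ k * 2 := by ring
    omega
  · intro i
    show (cstar k (σ i) ≠ stripe (2 ^ k) (2 ^ r) (σ i)) ↔ ¬(cstar k i ≠ stripe (2 ^ k) (2 ^ r) i)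
    rw [hcs, hst]
    cases cstar k i <;> cases stripe (2 ^ k) (2 ^ r) i <;> simp

lemma dist_compl {k : ℕ} (c v : Fin (2 * 2 ^ k) → Bool) :
    hammingDist c (fun t => !(v t)) = 2 * 2 ^ k - hammingDist c v := by
  have h : (Finset.univ.filter (fun i => c i ≠ !(v i)))
      = Finset.univ.filter (fun i => ¬ (c i ≠ v i)) := by
    ext i
    simp only [Finset.mem_filter, Finset.mem_univ, true_and]
    cases c i <;> cases v i <;> simp
  have h2 := Finset.card_filter_add_card_filter_not (s := Finset.univ)
    (p := fun i : Fin (2 * 2 ^ k) => c i ≠ v i)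
  simp only [Finset.card_univ, Fintype.card_fin] at h2
  show (Finset.univ.filter (fun i => c i ≠ !(v i))).card = _
  rw [h]
  have : hammingDist c v = (Finset.univ.filter (fun i => c i ≠ v i)).card := rfl
  omega

lemma cstar_approves (k : ℕ) (hk : 1 ≤ k) :
    ∀ b ∈ stripeFamily k, hammingDist (cstar k) b ≤ 2 ^ k := by
  intro b hb
  simp only [stripeFamily, Multiset.mem_bind, Multiset.mem_range] at hb
  obtain ⟨r, hr, hb⟩ := hb
  have hd := dist_cstar_stripe k r hk hr
  simp only [Multiset.insert_eq_cons, Multiset.mem_cons, Multiset.mem_singleton] at hb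
  rcases hb with rfl | rfl
  · omega
  · rw [dist_compl]
    omega

lemma filter_nsmul {α : Type*} (p : α → Prop) [DecidablePred p] (n : ℕ) (s : Multiset α) :
    (n • s).filter p = n • s.filter p := by
  induction n with
  | zero => simp
  | succ n ih => simp [succ_nsmul, Multiset.filter_add, ih]

/-- Let `n = 2^k` with `k ≥ 1`, and let `V` consist of `m + 1` copies of
each vector in the stripe family `B` together with `m` further arbitrary vectors `W`.
Then any `c` maximizing the approval count
`App(c) = |{v ∈ V : d_H(c, v) ≤ n}|` (with multiplicity)
is within distance `n` of every vector in `B`. -/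
theorem approval_maximizer_approved_by_all_stripes
    (k m : ℕ) (hk : 1 ≤ k)
    (W : Multiset (Fin (2 * 2 ^ k) → Bool)) (hW : Multiset.card W = m)
    (c : Fin (2 * 2 ^ k) → Bool)
    (hmax : ∀ c' : Fin (2 * 2 ^ k) → Bool,
      Multiset.card
        (((m + 1) • stripeFamily k + W).filter (fun v => hammingDist c' v ≤ 2 ^ k)) ≤
      Multiset.card
        (((m + 1) • stripeFamily k + W).filter (fun v => hammingDist c v ≤ 2 ^ k))) :
    ∀ b ∈ stripeFamily k, hammingDist c b ≤ 2 ^ k := by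
  by_contra hcon
  push_neg at hcon
  obtain ⟨b0, hb0, hd0⟩ := hcon
  set B := stripeFamily k with hBdef
  -- lower bound on App(cstar)
  have hfull : B.filter (fun v => hammingDist (cstar k) v ≤ 2 ^ k) = B :=
    Multiset.filter_eq_self.mpr (cstar_approves k hk)
  have hlow : (m + 1) * Multiset.card B ≤
      Multiset.card (((m + 1) • B + W).filter (fun v => hammingDist (cstar k) v ≤ 2 ^ k)) := by
    rw [Multiset.filter_add, Multiset.card_add, filter_nsmul, hfull, Multiset.card_nsmul]
    omega
  -- upper bound on App(c)
  have herase : b0 ::ₘ B.erase b0 = B := Multiset.cons_erase hb0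
  have hfiltB : Multiset.card (B.filter (fun v => hammingDist c v ≤ 2 ^ k))
      ≤ Multiset.card B - 1 := by
    have h1 : B.filter (fun v => hammingDist c v ≤ 2 ^ k)
        = (B.erase b0).filter (fun v => hammingDist c v ≤ 2 ^ k) := by
      conv_lhs => rw [← herase]
      rw [Multiset.filter_cons_of_neg _ (by simp; omega)]
    rw [h1]
    have h2 : Multiset.card (B.erase b0) = Multiset.card B - 1 :=
      Multiset.card_erase_of_mem hb0
    calc Multiset.card ((B.erase b0).filter (fun v => hammingDist c v ≤ 2 ^ k))
          ≤ Multiset.card (B.erase b0) :=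
          Multiset.card_le_card (Multiset.filter_le _ _)
      _ = Multiset.card B - 1 := h2
  have hcardB : 1 ≤ Multiset.card B := by
    rw [← herase]; simp
  have hup : Multiset.card (((m + 1) • B + W).filter (fun v => hammingDist c v ≤ 2 ^ k))
      ≤ (m + 1) * (Multiset.card B - 1) + m := by
    rw [Multiset.filter_add, Multiset.card_add, filter_nsmul, Multiset.card_nsmul]
    have hWf : Multiset.card (W.filter (fun v => hammingDist c v ≤ 2 ^ k)) ≤ m := by
      calc Multiset.card (W.filter (fun v => hammingDist c v ≤ 2 ^ k)) ≤ Multiset.card W :=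
            Multiset.card_le_card (Multiset.filter_le _ _)
        _ = m := hW
    have := Nat.mul_le_mul_left (m + 1) hfiltB
    omega
  have hm := hmax (cstar k)
  obtain ⟨d, hd⟩ : ∃ d, Multiset.card B = d + 1 := ⟨Multiset.card B - 1, by omega⟩
  rw [hd] at hlow hup
  simp only [Nat.add_sub_cancel] at hup
  have hexp : (m + 1) * (d + 1) = (m + 1) * d + (m + 1) := by ring
  rw [hexp] at hlow
  set q := (m + 1) * d with hq
  omega
end
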